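/- Let G = F∞ ⋊_α ℤ as above and H_n = ⟨g_i : i ≥ n⟩ ⊆ G. Then the one-sided normalizer semigroup ON_G(H_n) = {g ∈ G : gH_ng⁻¹ ⊆ H_n} equals {vφʳ : v ∈ H_n, r ≥ 0}, where φ denotes the generator of the ℤ-factor of the semidirect product. -/

import Mathlib

/-!
Write `g = vφʳ`; conjugation by `g` sends `h ∈ Hₙ` to `v φʳ(h) v⁻¹`, and `φʳ(Hₙ) = H_{n+r}`.
If `r < 0`, the retraction of `F∞` onto `Hₙ` that kills the other generators fixes the element
`v g_{n+r} v⁻¹` of `Hₙ` but sends it to `1`, which is absurd. If `r ≥ 0`, pick `m ≥ n + r` not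
occurring in the reduced word of `v`: then `v g_m v⁻¹` is already reduced as written, so every
letter of `v` is a letter of an element of `Hₙ`, hence at least `n`, and `v ∈ Hₙ`.
-/

open Set Subgroup

namespace FreeGroup

variable {α β : Type*}

lemma exists_mem_fst_eq_of_mem_invRev {L : List (α × Bool)} {l : α × Bool} (h : l ∈ invRev L) :
    ∃ l' ∈ L, l'.1 = l.1 := by
  simp only [invRev, List.mem_reverse, List.mem_map] at h
  obtain ⟨l', hl', rfl⟩ := h
  exact ⟨l', hl', rfl⟩

section Words

variable [DecidableEq α]

lemma mem_closure_image_of_iff {S : Set α} {x : FreeGroup α} :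
    x ∈ closure (of '' S) ↔ ∀ l ∈ x.toWord, l.1 ∈ S := by
  constructor
  · intro hx
    induction hx using closure_induction with
    | mem x hx =>
      obtain ⟨a, ha, rfl⟩ := hx
      simpa [toWord_of] using ha
    | one => simp
    | mul x y _ _ hx hy =>
      intro l hl
      rcases List.mem_append.mp ((toWord_mul_sublist x y).subset hl) with h | h
      exacts [hx l h, hy l h]
    | inv x _ hx =>
      intro l hl
      rw [toWord_inv] at hl
      obtain ⟨l', hl', he⟩ := exists_mem_fst_eq_of_mem_invRev hl
      exact he ▸ hx l' hl'
  · intro hx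
    rw [← mk_toWord (x := x)]
    generalize x.toWord = L at hx
    induction L with
    | nil => exact one_mem _
    | cons l L ih =>
      obtain ⟨a, b⟩ := l
      have ha : of a ∈ closure (of '' S) := subset_closure ⟨a, hx (a, b) List.mem_cons_self, rfl⟩
      rw [← List.singleton_append, ← mul_mk]
      refine mul_mem ?_ (ih fun l hl => hx l (List.mem_cons_of_mem _ hl))
      cases b
      · rw [show mk [(a, false)] = (of a)⁻¹ by rw [of, inv_mk]; rfl]
        exact inv_mem ha
      · exact ha

lemma toWord_mul_of_mul_inv {v : FreeGroup α} {a : α} (ha : ∀ l ∈ v.toWord, l.1 ≠ a) :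
    (v * of a * v⁻¹).toWord = v.toWord ++ (a, true) :: invRev v.toWord := by
  have hinv : IsReduced (invRev v.toWord) := toWord_inv v ▸ isReduced_toWord
  have hred : IsReduced (v.toWord ++ (a, true) :: invRev v.toWord) := by
    refine isReduced_toWord.append (hinv.cons fun y hy hya => ?_) fun y hy z hz hyz => ?_
    · obtain ⟨l, hl, he⟩ := exists_mem_fst_eq_of_mem_invRev (List.mem_of_mem_head? hy)
      exact absurd (he.trans hya.symm) (ha l hl)
    · simp only [List.head?_cons, Option.mem_def, Option.some.injEq] at hz
      subst hz
      exact absurd hyz (ha y (List.mem_of_mem_getLast? hy))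
  conv_lhs => rw [← mk_toWord (x := v)]
  rw [← hred.reduce_eq, ← toWord_mk, inv_mk, of, mul_mk, mul_mk, List.append_assoc,
    List.singleton_append]

lemma mem_closure_image_of_of_forall_conj_mem {S T : Set α} (hT : T.Infinite) {v : FreeGroup α}
    (h : ∀ a ∈ T, v * of a * v⁻¹ ∈ closure (of '' S)) : v ∈ closure (of '' S) := by
  obtain ⟨a, haT, ha⟩ := hT.exists_notMem_finset (v.toWord.map Prod.fst).toFinset
  have hfresh : ∀ l ∈ v.toWord, l.1 ≠ a := fun l hl hla =>
    ha (by simpa [hla] using List.mem_map_of_mem (f := Prod.fst) hl)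
  have hconj := mem_closure_image_of_iff.mp (h a haT)
  rw [toWord_mul_of_mul_inv hfresh] at hconj
  exact mem_closure_image_of_iff.mpr fun l hl => hconj l (List.mem_append_left _ hl)

end Words

lemma lift_mulIndicator_of_eq_self {S : Set α} {x : FreeGroup α} (hx : x ∈ closure (of '' S)) :
    lift (S.mulIndicator of) x = x := by
  induction hx using closure_induction with
  | mem x hx =>
    obtain ⟨a, ha, rfl⟩ := hx
    simp [mulIndicator_of_mem ha]
  | one => simp
  | mul x y _ _ hx hy => rw [_root_.map_mul, hx, hy]
  | inv x _ hx => rw [_root_.map_inv, hx]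

lemma conj_of_notMem_closure_image_of {S : Set α} {a : α} (ha : a ∉ S) (v : FreeGroup α) :
    v * of a * v⁻¹ ∉ closure (of '' S) := fun h => by
  have := lift_mulIndicator_of_eq_self h
  simp only [_root_.map_mul, _root_.map_inv, lift_apply_of, mulIndicator_of_notMem ha,
    mul_one, mul_inv_cancel] at this
  exact of_ne_one a (conj_eq_one_iff.mp this.symm)

lemma map_closure_image_of {f : α → β} (ψ : FreeGroup α →* FreeGroup β)
    (hψ : ∀ a, ψ (of a) = of (f a)) (S : Set α) :
    (closure (of '' S)).map ψ = closure (of '' (f '' S)) := by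
  rw [MonoidHom.map_closure, image_image, image_image]
  simp only [hψ]

end FreeGroup

namespace SemidirectProduct

variable {N G : Type*} [Group N] [Group G] {φ : G →* MulAut N}

lemma mul_inl_mul_inv (g : N ⋊[φ] G) (n : N) :
    g * inl n * g⁻¹ = inl (g.left * φ g.right n * g.left⁻¹) := by
  conv_lhs => rw [← inl_left_mul_inr_right g]
  simp only [map_mul, map_inv, inl_aut, mul_inv_rev, mul_assoc]

lemma forall_conj_mem_map_inl_iff {H : Subgroup N} {g : N ⋊[φ] G} :
    (∀ x ∈ H.map inl, g * x * g⁻¹ ∈ H.map inl) ↔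
      ∀ n ∈ H, g.left * φ g.right n * g.left⁻¹ ∈ H := by
  simp only [mem_map, forall_exists_index, and_imp, forall_apply_eq_imp_iff₂, mul_inl_mul_inv,
    inl_inj, exists_eq_right]

lemma eq_inl_mul_inr_iff {g : N ⋊[φ] G} {n : N} {k : G} :
    g = inl n * inr k ↔ g.left = n ∧ g.right = k := by
  simp [SemidirectProduct.ext_iff]

end SemidirectProduct

open FreeGroup SemidirectProduct in
/-- Let `G = F∞ ⋊ ℤ` as in Statement 3 and `Hₙ = ⟨gᵢ : i ≥ n⟩ ≤ G`.
Then the one-sided normalizer semigroup `ON_G(Hₙ) = {g : gHₙg⁻¹ ⊆ Hₙ}` equals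
`{vφʳ : v ∈ Hₙ, r ≥ 0}`. -/
theorem oneSidedNormalizer_Hn_in_semidirect_product
    (β : Multiplicative ℤ →* MulAut (FreeGroup ℤ))
    (hβ : ∀ (n i : ℤ), β (Multiplicative.ofAdd n) (FreeGroup.of i) = FreeGroup.of (i + n))
    (n : ℤ) :
    {g : FreeGroup ℤ ⋊[β] Multiplicative ℤ |
        ∀ x ∈ (Subgroup.closure {x : FreeGroup ℤ | ∃ i : ℤ, n ≤ i ∧ x = FreeGroup.of i}).map
          (SemidirectProduct.inl : FreeGroup ℤ →* FreeGroup ℤ ⋊[β] Multiplicative ℤ),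
          g * x * g⁻¹ ∈ (Subgroup.closure {x : FreeGroup ℤ | ∃ i : ℤ, n ≤ i ∧ x = FreeGroup.of i}).map
            (SemidirectProduct.inl : FreeGroup ℤ →* FreeGroup ℤ ⋊[β] Multiplicative ℤ)} =
      {g : FreeGroup ℤ ⋊[β] Multiplicative ℤ |
        ∃ v ∈ Subgroup.closure {x : FreeGroup ℤ | ∃ i : ℤ, n ≤ i ∧ x = FreeGroup.of i},
          ∃ r : ℤ, 0 ≤ r ∧
            g = SemidirectProduct.inl v * SemidirectProduct.inr (Multiplicative.ofAdd r)} := by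
  have hHn : {x : FreeGroup ℤ | ∃ i : ℤ, n ≤ i ∧ x = FreeGroup.of i} = of '' Ici n := by
    ext; simp [eq_comm]
  ext g
  obtain ⟨r, hr⟩ : ∃ r : ℤ, g.right = .ofAdd r := ⟨g.right.toAdd, rfl⟩
  simp only [mem_ofPred_eq, hHn, forall_conj_mem_map_inl_iff, eq_inl_mul_inr_iff, hr,
    EmbeddingLike.apply_eq_iff_eq, exists_eq_right_right']
  constructor
  · intro hconj
    have hr0 : 0 ≤ r := by
      by_contra! hneg
      refine conj_of_notMem_closure_image_of (S := Ici n) (a := n + r) (by simpa using hneg)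
        g.left ?_
      simpa only [hβ] using hconj _ (subset_closure (mem_image_of_mem of self_mem_Ici))
    refine ⟨mem_closure_image_of_of_forall_conj_mem (Ici_infinite (n + r)) fun a ha => ?_, hr0⟩
    have ha' : a - r ∈ Ici n := by simp only [mem_Ici] at ha ⊢; omega
    simpa only [hβ, sub_add_cancel] using hconj _ (subset_closure (mem_image_of_mem of ha'))
  · rintro ⟨hv, hr0⟩ h hh
    have hβh : β (.ofAdd r) h ∈ closure (of '' Ici (n + r)) := by
      rw [← image_add_const_Ici, ← map_closure_image_of (β (.ofAdd r)).toMonoidHom (hβ r)]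
      exact mem_map_of_mem _ hh
    have hmono : closure (of '' Ici (n + r)) ≤ closure (of '' Ici n) :=
      closure_mono (image_mono (Ici_subset_Ici.2 (by omega)))
    exact mul_mem (mul_mem hv (hmono hβh)) (inv_mem hv)
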